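/- arXiv:2412.09552 — 4 statements merged into one kernel-verified Lean document; each statement's English description precedes it below -/
import Mathlib

section
/- Let H be a Hopf algebra with a symmetric left partial action · : H ⊗ A → A on a unital algebra A. Then for all h,k ∈ H and a,b ∈ A one has (h_(1)·(k·a))(h_(2)·b) = (h_(1)k·a)(h_(2)·b). -/
open TensorProduct

/-- Sweedler-style sum `h ↦ Σ f(h₍₁₎) * g(h₍₂₎)` for linear maps `f g : H →ₗ[k] A`,
with respect to a bilinear multiplication `mul` on `A`. -/
noncomputable def sweedler {k H A : Type*} [CommRing k] [Ring H] [HopfAlgebra k H]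
    [AddCommGroup A] [Module k A]
    (mul : A →ₗ[k] A →ₗ[k] A) (f g : H →ₗ[k] A) : H →ₗ[k] A :=
  TensorProduct.lift ((mul ∘ₗ f).compl₂ g) ∘ₗ Coalgebra.comul

section aux
variable {k H A : Type*} [CommRing k] [Ring H] [HopfAlgebra k H] [Ring A] [Algebra k A]

lemma aux_lift (f g : H →ₗ[k] A) :
    TensorProduct.lift ((LinearMap.mul k A ∘ₗ f).compl₂ g) =
      LinearMap.mul' k A ∘ₗ TensorProduct.map f g := by
  apply TensorProduct.ext'
  intro x y
  simp [LinearMap.mul'_apply]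

lemma aux_A1 (f g e : H →ₗ[k] A) :
    sweedler (LinearMap.mul k A) (sweedler (LinearMap.mul k A) f g) e =
      ((LinearMap.mul' k A ∘ₗ TensorProduct.map (LinearMap.mul' k A) LinearMap.id ∘ₗ
        TensorProduct.map (TensorProduct.map f g) e) ∘ₗ
        LinearMap.rTensor H (Coalgebra.comul (R := k) (A := H))) ∘ₗ Coalgebra.comul := by
  unfold sweedler
  rw [aux_lift, aux_lift]
  refine congrArg (LinearMap.comp · Coalgebra.comul) ?_
  apply TensorProduct.ext'
  intro x y
  simp [LinearMap.mul'_apply]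

lemma aux_A2 (f g e : H →ₗ[k] A) :
    sweedler (LinearMap.mul k A) f (sweedler (LinearMap.mul k A) g e) =
      ((LinearMap.mul' k A ∘ₗ TensorProduct.map LinearMap.id (LinearMap.mul' k A) ∘ₗ
        TensorProduct.map f (TensorProduct.map g e)) ∘ₗ
        LinearMap.lTensor H (Coalgebra.comul (R := k) (A := H))) ∘ₗ Coalgebra.comul := by
  unfold sweedler
  rw [aux_lift, aux_lift]
  refine congrArg (LinearMap.comp · Coalgebra.comul) ?_
  apply TensorProduct.ext'
  intro x y
  simp [LinearMap.mul'_apply]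

lemma aux_mulassoc (f g e : H →ₗ[k] A) :
    LinearMap.mul' k A ∘ₗ TensorProduct.map (LinearMap.mul' k A) LinearMap.id ∘ₗ
        TensorProduct.map (TensorProduct.map f g) e =
      (LinearMap.mul' k A ∘ₗ TensorProduct.map LinearMap.id (LinearMap.mul' k A) ∘ₗ
        TensorProduct.map f (TensorProduct.map g e)) ∘ₗ
        (TensorProduct.assoc k H H H).toLinearMap := by
  apply TensorProduct.ext_threefold
  intro x y z
  simp [LinearMap.mul'_apply, mul_assoc]

lemma sweedler_assoc (f g e : H →ₗ[k] A) :
    sweedler (LinearMap.mul k A) (sweedler (LinearMap.mul k A) f g) e =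
      sweedler (LinearMap.mul k A) f (sweedler (LinearMap.mul k A) g e) := by
  rw [aux_A1, aux_A2, aux_mulassoc]
  show (LinearMap.mul' k A ∘ₗ TensorProduct.map LinearMap.id (LinearMap.mul' k A) ∘ₗ
        TensorProduct.map f (TensorProduct.map g e)) ∘ₗ
      ((TensorProduct.assoc k H H H).toLinearMap ∘ₗ
        LinearMap.rTensor H Coalgebra.comul ∘ₗ Coalgebra.comul) =
    (LinearMap.mul' k A ∘ₗ TensorProduct.map LinearMap.id (LinearMap.mul' k A) ∘ₗ
        TensorProduct.map f (TensorProduct.map g e)) ∘ₗ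
      (LinearMap.lTensor H Coalgebra.comul ∘ₗ Coalgebra.comul)
  rw [Coalgebra.coassoc]

end aux

/-- A symmetric left partial action of a Hopf algebra `H` on a unital `k`-algebra `A`:
(LPA1) `1_H · a = a`; (LPA2) `h·(ab) = (h₍₁₎·a)(h₍₂₎·b)`;
(LPA3) `h·(g·a) = (h₍₁₎·1)(h₍₂₎g·a) = (h₍₁₎g·a)(h₍₂₎·1)`. -/
structure IsLeftPartialAction (k : Type*) {H A : Type*} [CommRing k] [Ring H]
    [HopfAlgebra k H] [Ring A] [Algebra k A]
    (act : H →ₗ[k] A →ₗ[k] A) : Prop where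
  lpa1 : ∀ a : A, act 1 a = a
  lpa2 : ∀ (h : H) (a b : A),
    act h (a * b) = sweedler (LinearMap.mul k A) (act.flip a) (act.flip b) h
  lpa3 : ∀ (h g : H) (a : A),
    act h (act g a) =
      sweedler (LinearMap.mul k A) (act.flip 1)
        ((act.flip a) ∘ₗ LinearMap.mulRight k g) h
  lpa3' : ∀ (h g : H) (a : A),
    act h (act g a) =
      sweedler (LinearMap.mul k A) ((act.flip a) ∘ₗ LinearMap.mulRight k g)
        (act.flip 1) h

/-- For a symmetric left partial action one has
`(h₍₁₎·(g·a))(h₍₂₎·b) = (h₍₁₎g·a)(h₍₂₎·b)` for all `h g ∈ H`, `a b ∈ A`. -/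
theorem leftPartialAction_sweedler_act_mul
    {k H A : Type*} [CommRing k] [Ring H] [HopfAlgebra k H] [Ring A] [Algebra k A]
    (act : H →ₗ[k] A →ₗ[k] A) (hact : IsLeftPartialAction k act)
    (h g : H) (a b : A) :
    sweedler (LinearMap.mul k A) (act.flip (act g a)) (act.flip b) h =
      sweedler (LinearMap.mul k A) ((act.flip a) ∘ₗ LinearMap.mulRight k g)
        (act.flip b) h := by
  have h1 : act.flip (act g a) =
      sweedler (LinearMap.mul k A) ((act.flip a) ∘ₗ LinearMap.mulRight k g)
        (act.flip 1) := LinearMap.ext fun x => hact.lpa3' x g a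
  have h2 : act.flip b =
      sweedler (LinearMap.mul k A) (act.flip 1) (act.flip b) := by
    refine LinearMap.ext fun x => ?_
    have := hact.lpa3 x 1 b
    rw [hact.lpa1 b, LinearMap.mulRight_one, LinearMap.comp_id] at this
    exact this
  rw [h1, sweedler_assoc, ← h2]
end

section
/- Let G be a group and · a symmetric left partial action of kG on a unital algebra A. Setting D_g = A(g·1_A) and α_g(a) = g·a for a ∈ D_{g⁻¹}, the collection (D_g, α_g)_{g∈G} is a unital partial action of G on A: each D_g is an ideal generated by the central idempotent 1_g = g·1_A, α_g : D_{g⁻¹} → D_g is an algebra isomorphism, α_e = id, and α_g(α_h(a)) = α_{gh}(a) for a ∈ D_{h⁻¹} ∩ D_{(gh)⁻¹}. -/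
/-- A symmetric left partial action of the group algebra `kG` on a unital algebra `A`,
described on group elements (which determine it by linearity): (LPA1) `1·a = a`;
(LPA2) `g·(ab) = (g·a)(g·b)`; (LPA3) `g·(h·a) = (g·1)(gh·a) = (gh·a)(g·1)`. -/
structure IsGroupAlgebraPartialAction (k : Type*) {G A : Type*} [Field k] [Group G]
    [Ring A] [Algebra k A] (act : G → A →ₗ[k] A) : Prop where
  lpa1 : ∀ a : A, act 1 a = a
  lpa2 : ∀ (g : G) (a b : A), act g (a * b) = act g a * act g b
  lpa3 : ∀ (g h : G) (a : A), act g (act h a) = act g 1 * act (g * h) a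
  lpa3' : ∀ (g h : G) (a : A), act g (act h a) = act (g * h) a * act g 1

/-- For a symmetric left partial action of `kG` on `A`, setting
`1_g := g·1`, `D_g := A·1_g = {a | a·1_g = a}` and `α_g(a) := g·a` for `a ∈ D_{g⁻¹}`,
the data `(D_g, α_g)_{g ∈ G}` is a unital partial action of `G` on `A`: each `1_g`
is a central idempotent (so `D_g` is a unital ideal), `α_g` maps `D_{g⁻¹}` into `D_g`
multiplicatively with inverse `α_{g⁻¹}`, `α_e = id`, and `α_g ∘ α_h = α_{gh}` on
`D_{h⁻¹} ∩ D_{(gh)⁻¹}`. -/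
theorem groupAlgebraPartialAction_gives_unital_partial_action
    {k G A : Type*} [Field k] [Group G] [Ring A] [Algebra k A]
    (act : G → A →ₗ[k] A) (hact : IsGroupAlgebraPartialAction k act) :
    -- each `1_g` is a central idempotent
    (∀ g : G, act g 1 * act g 1 = act g 1) ∧
    (∀ (g : G) (a : A), act g 1 * a = a * act g 1) ∧
    -- `α_g` maps `D_{g⁻¹}` into `D_g`
    (∀ (g : G) (a : A), a * act g⁻¹ 1 = a → act g a * act g 1 = act g a) ∧
    -- `α_e = id`
    (∀ a : A, act 1 a = a) ∧
    -- `α_g` is multiplicative on `D_{g⁻¹}`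
    (∀ (g : G) (a b : A), a * act g⁻¹ 1 = a → b * act g⁻¹ 1 = b →
      act g (a * b) = act g a * act g b) ∧
    -- `α_{g⁻¹}` is inverse to `α_g` (so `α_g : D_{g⁻¹} → D_g` is an isomorphism)
    (∀ (g : G) (a : A), a * act g⁻¹ 1 = a → act g⁻¹ (act g a) = a) ∧
    (∀ (g : G) (a : A), a * act g 1 = a → act g (act g⁻¹ a) = a) ∧
    -- partial cocycle condition on `D_{h⁻¹} ∩ D_{(gh)⁻¹}`
    (∀ (g h : G) (a : A), a * act h⁻¹ 1 = a → a * act (g * h)⁻¹ 1 = a →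
      act g (act h a) = act (g * h) a) := by
  obtain ⟨h1, h2, h3, h3'⟩ := hact
  -- a·1_g = act g a always (right unit)
  have hr : ∀ (g : G) (a : A), act g a * act g 1 = act g a := by
    intro g a
    have := h3' g 1 a
    simpa [h1] using this.symm
  have hl : ∀ (g : G) (a : A), act g 1 * act g a = act g a := by
    intro g a
    have := h3 g 1 a
    simpa [h1] using this.symm
  -- act g (act g⁻¹ a) = 1_g * a = a * 1_g
  have key : ∀ (g : G) (a : A), act g (act g⁻¹ a) = act g 1 * a := by
    intro g a; simpa [h1] using h3 g g⁻¹ a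
  have key' : ∀ (g : G) (a : A), act g (act g⁻¹ a) = a * act g 1 := by
    intro g a; simpa [h1] using h3' g g⁻¹ a
  have central : ∀ (g : G) (a : A), act g 1 * a = a * act g 1 := by
    intro g a; rw [← key, key']
  refine ⟨fun g => hr g 1, central, fun g a _ => hr g a, h1,
    fun g a b _ _ => h2 g a b, ?_, ?_, ?_⟩
  · intro g a ha
    have := key g⁻¹ (a := a)
    rw [inv_inv] at this
    rw [this, central, ha]
  · intro g a ha
    rw [key', ha]
  · intro g h a ha _
    have e1 : act (g * h) (act h⁻¹ 1) = act (g * h) 1 * act g 1 := by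
      simpa using h3 (g * h) h⁻¹ 1
    calc act g (act h a) = act g 1 * act (g * h) a := h3 g h a
      _ = act (g * h) a * act g 1 := central _ _
      _ = act (g * h) a := by
          conv_lhs => rw [← ha, h2, e1, ← mul_assoc, hr]
          conv_rhs => rw [← ha, h2, e1, ← mul_assoc, hr]
          rw [mul_assoc, hr g 1]
end

section
/- Let H be a Hopf algebra with a symmetric left partial action on an algebra A. The map π : H → End(A) defined by π(h)(a) = h·a is a partial representation of H in the endomorphism algebra End(A). -/
open TensorProduct

/-- A partial representation of a Hopf algebra `H` in a unital algebra `B`: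
(PR1) `π(1) = 1`; (PR2) `π(h)π(k₍₁₎)π(S(k₍₂₎)) = π(hk₍₁₎)π(S(k₍₂₎))`;
(PR3) `π(h₍₁₎)π(S(h₍₂₎))π(g) = π(h₍₁₎)π(S(h₍₂₎)g)`. -/
structure IsPartialRep (k : Type*) {H B : Type*} [CommRing k] [Ring H] [HopfAlgebra k H]
    [Ring B] [Algebra k B] (π : H →ₗ[k] B) : Prop where
  pr1 : π 1 = 1
  pr2 : ∀ h kk : H,
    sweedler (LinearMap.mul k B) ((LinearMap.mulLeft k (π h)) ∘ₗ π)
      (π ∘ₗ (HopfAlgebra.antipode k : H →ₗ[k] H)) kk =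
    sweedler (LinearMap.mul k B) (π ∘ₗ LinearMap.mulLeft k h)
      (π ∘ₗ (HopfAlgebra.antipode k : H →ₗ[k] H)) kk
  pr3 : ∀ h g : H,
    sweedler (LinearMap.mul k B) π (π ∘ₗ (HopfAlgebra.antipode k : H →ₗ[k] H)) h * π g =
    sweedler (LinearMap.mul k B) π
      (π ∘ₗ LinearMap.mulRight k g ∘ₗ (HopfAlgebra.antipode k : H →ₗ[k] H)) h

/-!
Write `h·a` for the action and `⋆` for the convolution product of linear maps out of `H`,
which is what `sweedler` computes. By (LPA3), `h·(g·a) = actTensor act a (Δh * (1 ⊗ g))`,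
where `actTensor act a (u ⊗ v) = (u·1)(v·a)`. Summing over the Sweedler components of `x` and
using the Hopf identity `Σ Δ(x₁) (1 ⊗ S x₂) = x ⊗ 1` gives
`Σ (h x₁)·(S(x₂) g·a) = actTensor act a (Δh * (x ⊗ g))`,
which evaluates both sides of (PR3) to `(h·1)(g·a)`. The left side of (PR2) is
`h·((x·1)a) = Σ (h₁·(x·1))(h₂·a)` by (LPA2); expanding `h₁·(x·1)` by (LPA3') and recombining
by (LPA2) and associativity of `⋆` turns it into `Σ (h₁x·1)(h₂·a) = actTensor act a (Δh * (x ⊗ 1))`,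
which is the right side.
-/

open Coalgebra WithConv

section Sweedler

variable {k H B : Type*} [CommRing k] [Ring H] [HopfAlgebra k H] [Ring B] [Algebra k B]

theorem sweedler_mul_eq_convMul (f g : H →ₗ[k] B) :
    sweedler (LinearMap.mul k B) f g = (toConv f * toConv g).ofConv := by
  rw [LinearMap.convMul_def, ofConv_toConv, sweedler, ← LinearMap.comp_assoc]
  congr 1
  ext x y
  simp

theorem sweedler_mul_apply_repr {x : H} {ι : Type*} (𝓡 : Repr k x ι) (f g : H →ₗ[k] B) :
    sweedler (LinearMap.mul k B) f g x = ∑ i ∈ 𝓡.index, f (𝓡.left i) * g (𝓡.right i) := by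
  rw [sweedler_mul_eq_convMul, 𝓡.convMul_apply]

theorem sweedler_mulLeft_comp (c : B) (f g : H →ₗ[k] B) :
    sweedler (LinearMap.mul k B) (LinearMap.mulLeft k c ∘ₗ f) g =
      LinearMap.mulLeft k c ∘ₗ sweedler (LinearMap.mul k B) f g := by
  ext x
  simp [sweedler_mul_apply_repr (ℛ k x), mul_assoc]

end Sweedler

section Antipode

variable {k H : Type*} [CommSemiring k] [Semiring H] [HopfAlgebra k H]

open Algebra.TensorProduct in
theorem comul_convMul_includeRight_comp_antipode :
    toConv (comul : H →ₗ[k] H ⊗[k] H) *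
        toConv ((includeRight : H →ₐ[k] H ⊗[k] H).toLinearMap ∘ₗ HopfAlgebra.antipode k) =
      toConv (includeLeft : H →ₐ[k] H ⊗[k] H).toLinearMap := by
  set i₁ := (includeLeft : H →ₐ[k] H ⊗[k] H)
  set i₂ := (includeRight : H →ₐ[k] H ⊗[k] H)
  have comul_eq :
      toConv (comul : H →ₗ[k] H ⊗[k] H) = toConv i₁.toLinearMap * toConv i₂.toLinearMap := by
    have mul'_comp_map : LinearMap.mul' k (H ⊗[k] H) ∘ₗ
        TensorProduct.map i₁.toLinearMap i₂.toLinearMap = .id := by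
      ext x y
      simp [i₁, i₂]
    ext x
    rw [LinearMap.convMul_apply, ofConv_toConv, ofConv_toConv, ← LinearMap.comp_apply,
      mul'_comp_map, LinearMap.id_apply]
  have comp_one : i₂.toLinearMap ∘ₗ (1 : WithConv (H →ₗ[k] H)).ofConv =
      (1 : WithConv (H →ₗ[k] H ⊗[k] H)).ofConv := by
    ext x
    simp only [i₂, LinearMap.comp_apply, LinearMap.convOne_apply, AlgHom.toLinearMap_apply,
      includeRight_apply, Algebra.algebraMap_eq_smul_one, TensorProduct.tmul_smul, one_def]
  calc _ = toConv i₁.toLinearMap * toConv (i₂.toLinearMap ∘ₗ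
        (toConv LinearMap.id * toConv (HopfAlgebra.antipode k) : WithConv (H →ₗ[k] H)).ofConv) := by
        rw [comul_eq, mul_assoc, LinearMap.algHom_comp_convMul_distrib, LinearMap.comp_id]
    _ = _ := by
        rw [LinearMap.id_mul_antipode, comp_one, toConv_ofConv, mul_one]

theorem sum_comul_mul_tmul_antipode {x : H} {ι : Type*} (𝓡 : Repr k x ι) :
    ∑ i ∈ 𝓡.index, comul (𝓡.left i) * (1 ⊗ₜ[k] HopfAlgebra.antipode k (𝓡.right i)) =
      x ⊗ₜ[k] 1 := by
  simpa [𝓡.convMul_apply] using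
    congr(($(comul_convMul_includeRight_comp_antipode (k := k) (H := H))) x)

end Antipode

section ActTensor

variable {k H A : Type*} [CommSemiring k] [Semiring H] [Semiring A] [Algebra k A]

variable [Module k H] in
noncomputable def actTensor (act : H →ₗ[k] A →ₗ[k] A) (a : A) : H ⊗[k] H →ₗ[k] A :=
  LinearMap.mul' k A ∘ₗ TensorProduct.map (act.flip 1) (act.flip a)

variable [Module k H] in
@[simp]
theorem actTensor_tmul (act : H →ₗ[k] A →ₗ[k] A) (a : A) (u v : H) :
    actTensor act a (u ⊗ₜ v) = act u 1 * act v a := by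
  simp [actTensor]

theorem actTensor_comul_mul_tmul [Bialgebra k H] (act : H →ₗ[k] A →ₗ[k] A) (a : A) (h x y : H) :
    actTensor act a (comul h * (x ⊗ₜ y)) =
      (toConv (act.flip 1 ∘ₗ LinearMap.mulRight k x) *
        toConv (act.flip a ∘ₗ LinearMap.mulRight k y)) h := by
  have comp_mulRight : actTensor act a ∘ₗ LinearMap.mulRight k (x ⊗ₜ[k] y) =
      LinearMap.mul' k A ∘ₗ
        TensorProduct.map (act.flip 1 ∘ₗ LinearMap.mulRight k x)
          (act.flip a ∘ₗ LinearMap.mulRight k y) := by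
    ext u v
    simp [Algebra.TensorProduct.tmul_mul_tmul]
  exact congr($comp_mulRight (comul h))

end ActTensor

namespace IsLeftPartialAction

variable {k H A : Type*} [CommRing k] [Ring H] [HopfAlgebra k H] [Ring A] [Algebra k A]
  {act : H →ₗ[k] A →ₗ[k] A} (hact : IsLeftPartialAction k act)
include hact

theorem toConv_flip_mul (a b : A) :
    toConv (act.flip (a * b)) = toConv (act.flip a) * toConv (act.flip b) := by
  ext h
  rw [ofConv_toConv, LinearMap.flip_apply, hact.lpa2, sweedler_mul_eq_convMul]

theorem toConv_flip_act (g : H) (a : A) :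
    toConv (act.flip (act g a)) =
      toConv (act.flip 1) * toConv (act.flip a ∘ₗ LinearMap.mulRight k g) := by
  ext h
  rw [ofConv_toConv, LinearMap.flip_apply, hact.lpa3, sweedler_mul_eq_convMul]

theorem toConv_flip_act' (g : H) (a : A) :
    toConv (act.flip (act g a)) =
      toConv (act.flip a ∘ₗ LinearMap.mulRight k g) * toConv (act.flip 1) := by
  ext h
  rw [ofConv_toConv, LinearMap.flip_apply, hact.lpa3', sweedler_mul_eq_convMul]

theorem toConv_flip_act_one_mul (g : H) (a : A) :
    toConv (act.flip (act g 1)) * toConv (act.flip a) =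
      toConv (act.flip 1 ∘ₗ LinearMap.mulRight k g) * toConv (act.flip a) := by
  rw [hact.toConv_flip_act', mul_assoc, ← hact.toConv_flip_mul, one_mul]

theorem act_act_eq_actTensor (h g : H) (a : A) :
    act h (act g a) = actTensor act a (comul h * (1 ⊗ₜ g)) := by
  rw [actTensor_comul_mul_tmul, LinearMap.mulRight_one, LinearMap.comp_id,
    ← hact.toConv_flip_act]
  rfl

theorem sweedler_mulLeft_mulRight_antipode_apply (h x g : H) (a : A) :
    sweedler (LinearMap.mul k (Module.End k A)) (act ∘ₗ LinearMap.mulLeft k h)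
        (act ∘ₗ LinearMap.mulRight k g ∘ₗ HopfAlgebra.antipode k) x a =
      actTensor act a (comul h * (x ⊗ₜ g)) := by
  set 𝓡 := ℛ k x
  have sum_eq : ∑ i ∈ 𝓡.index,
      comul (h * 𝓡.left i) * (1 ⊗ₜ[k] (HopfAlgebra.antipode k (𝓡.right i) * g)) =
        comul h * (∑ i ∈ 𝓡.index,
          comul (𝓡.left i) * (1 ⊗ₜ[k] HopfAlgebra.antipode k (𝓡.right i))) * (1 ⊗ₜ[k] g) := by
    simp only [Finset.mul_sum, Finset.sum_mul, Bialgebra.comul_mul, mul_assoc,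
      Algebra.TensorProduct.tmul_mul_tmul, one_mul]
  rw [sweedler_mul_apply_repr 𝓡, LinearMap.sum_apply]
  simp only [Module.End.mul_apply, LinearMap.comp_apply, LinearMap.mulLeft_apply,
    LinearMap.mulRight_apply, hact.act_act_eq_actTensor, ← map_sum, sum_eq,
    sum_comul_mul_tmul_antipode]
  rw [mul_assoc, Algebra.TensorProduct.tmul_mul_tmul, mul_one, one_mul]

theorem sweedler_antipode_apply (x : H) (a : A) :
    sweedler (LinearMap.mul k (Module.End k A)) act (act ∘ₗ HopfAlgebra.antipode k) x a =
      act x 1 * a := by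
  simpa [hact.lpa1] using hact.sweedler_mulLeft_mulRight_antipode_apply 1 x 1 a

end IsLeftPartialAction

/-- If `H` acts partially (symmetrically, on the left) on `A`, then
`π : H → End(A)`, `π(h)(a) = h·a`, is a partial representation of `H` in the
endomorphism algebra `End(A)`. -/
theorem leftPartialAction_isPartialRep
    {k H A : Type*} [CommRing k] [Ring H] [HopfAlgebra k H] [Ring A] [Algebra k A]
    (act : H →ₗ[k] A →ₗ[k] A) (hact : IsLeftPartialAction k act) :
    IsPartialRep k (act : H →ₗ[k] Module.End k A) := by
  refine ⟨LinearMap.ext hact.lpa1, fun h x => ?_, fun h g => ?_⟩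
  · ext a
    calc _ = act h (act x 1 * a) := by
          rw [sweedler_mulLeft_comp, LinearMap.comp_apply, LinearMap.mulLeft_apply,
            Module.End.mul_apply, hact.sweedler_antipode_apply]
      _ = (toConv (act.flip 1 ∘ₗ LinearMap.mulRight k x) * toConv (act.flip a)) h := by
          rw [hact.lpa2, sweedler_mul_eq_convMul, hact.toConv_flip_act_one_mul]
      _ = actTensor act a (comul h * (x ⊗ₜ 1)) := by
          rw [actTensor_comul_mul_tmul, LinearMap.mulRight_one, LinearMap.comp_id]
      _ = _ := by
          simpa using (hact.sweedler_mulLeft_mulRight_antipode_apply h x 1 a).symm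
  · ext a
    have rhs := hact.sweedler_mulLeft_mulRight_antipode_apply 1 h g a
    rw [LinearMap.mulLeft_one, LinearMap.comp_id, Bialgebra.comul_one, one_mul,
      actTensor_tmul] at rhs
    rw [Module.End.mul_apply, hact.sweedler_antipode_apply, rhs]
end

section
/- Let A be a unital algebra, e ∈ A an idempotent, H a Hopf algebra, and · : H⊗A → A a symmetric left partial action such that h·e = ε(h)e for all h ∈ H. Then h·(ea) = e(h·a) and h·(ae) = (h·a)e for all a ∈ A, h ∈ H; in particular h·(eae) ∈ eAe, and the restriction of · to the corner algebra eAe is a symmetric left partial action of H on eAe. -/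
open TensorProduct

/-- If `f x = ε(x) • e`, then the Sweedler sum collapses to left multiplication by `e`. -/
lemma sweedler_counit_left {k H A : Type*} [CommRing k] [Ring H] [HopfAlgebra k H]
    [Ring A] [Algebra k A] (f g : H →ₗ[k] A) (e : A)
    (hf : ∀ x, f x = Coalgebra.counit (R := k) x • e) (h : H) :
    sweedler (LinearMap.mul k A) f g h = e * g h := by
  have key : TensorProduct.lift (((LinearMap.mul k A) ∘ₗ f).compl₂ g) =
      (LinearMap.mulLeft k e) ∘ₗ g ∘ₗ (TensorProduct.lid k H).toLinearMap ∘ₗ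
        (Coalgebra.counit (R := k)).rTensor H := by
    apply TensorProduct.ext'
    intro x y
    simp [hf x, smul_mul_assoc]
  have h2 : (Coalgebra.counit (R := k)).rTensor H (Coalgebra.comul h)
      = (1 : k) ⊗ₜ[k] h :=
    LinearMap.congr_fun (Coalgebra.rTensor_counit_comp_comul (R := k) (A := H)) h
  simp [sweedler, key, h2]

/-- If `g y = ε(y) • e`, then the Sweedler sum collapses to right multiplication by `e`. -/
lemma sweedler_counit_right {k H A : Type*} [CommRing k] [Ring H] [HopfAlgebra k H]
    [Ring A] [Algebra k A] (f g : H →ₗ[k] A) (e : A)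
    (hg : ∀ y, g y = Coalgebra.counit (R := k) y • e) (h : H) :
    sweedler (LinearMap.mul k A) f g h = f h * e := by
  have key : TensorProduct.lift (((LinearMap.mul k A) ∘ₗ f).compl₂ g) =
      (LinearMap.mulRight k e) ∘ₗ f ∘ₗ (TensorProduct.rid k H).toLinearMap ∘ₗ
        (Coalgebra.counit (R := k)).lTensor H := by
    apply TensorProduct.ext'
    intro x y
    simp [hg y, mul_smul_comm]
  have h2 : (Coalgebra.counit (R := k)).lTensor H (Coalgebra.comul h)
      = h ⊗ₜ[k] (1 : k) :=
    LinearMap.congr_fun (Coalgebra.lTensor_counit_comp_comul (R := k) (A := H)) h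
  simp [sweedler, key, h2]

/-- Sweedler sums agree if the corresponding products of values agree. -/
lemma sweedler_congr {k H A : Type*} [CommRing k] [Ring H] [HopfAlgebra k H]
    [Ring A] [Algebra k A] (f₁ g₁ f₂ g₂ : H →ₗ[k] A)
    (hfg : ∀ p q, f₁ p * g₁ q = f₂ p * g₂ q) :
    sweedler (LinearMap.mul k A) f₁ g₁ = sweedler (LinearMap.mul k A) f₂ g₂ := by
  unfold sweedler
  congr 1
  apply TensorProduct.ext'
  intro p q
  simpa using hfg p q

/-- Let `e ∈ A` be an idempotent and `·` a symmetric left partial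
action of `H` on `A` with `h·e = ε(h)e`.  Then `h·(ea) = e(h·a)` and `h·(ae) = (h·a)e`;
in particular `h·(eae) ∈ eAe`, and the restriction to the corner algebra `eAe`
(with unit `e`) is again a symmetric left partial action:  (LPA1)-(LPA2) hold on corner
elements, and (LPA3) holds with `1` replaced by the unit `e` of `eAe`. -/
theorem leftPartialAction_corner
    {k H A : Type*} [CommRing k] [Ring H] [HopfAlgebra k H] [Ring A] [Algebra k A]
    (act : H →ₗ[k] A →ₗ[k] A) (hact : IsLeftPartialAction k act)
    (e : A) (he : e * e = e)
    (hcounit : ∀ h : H, act h e = (Coalgebra.counit (R := k) h) • e) :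
    (∀ (h : H) (a : A), act h (e * a) = e * act h a) ∧
    (∀ (h : H) (a : A), act h (a * e) = act h a * e) ∧
    -- invariance of the corner:  `h·(eae) ∈ eAe`
    (∀ (h : H) (a : A), act h (e * a * e) = e * act h (e * a * e) * e) ∧
    -- (LPA1) for the restriction
    (∀ a : A, act 1 (e * a * e) = e * a * e) ∧
    -- (LPA2) for the restriction
    (∀ (h : H) (a b : A),
      act h ((e * a * e) * (e * b * e)) =
        sweedler (LinearMap.mul k A) (act.flip (e * a * e)) (act.flip (e * b * e)) h) ∧
    -- (LPA3) for the restriction, with unit `e` of the corner algebra `eAe`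
    (∀ (h g : H) (a : A),
      act h (act g (e * a * e)) =
        sweedler (LinearMap.mul k A) (act.flip e)
          ((act.flip (e * a * e)) ∘ₗ LinearMap.mulRight k g) h) ∧
    (∀ (h g : H) (a : A),
      act h (act g (e * a * e)) =
        sweedler (LinearMap.mul k A) ((act.flip (e * a * e)) ∘ₗ LinearMap.mulRight k g)
          (act.flip e) h) := by
  have hfe : ∀ x : H, act.flip e x = Coalgebra.counit (R := k) x • e := fun x => hcounit x
  -- h·(ea) = e(h·a)
  have hleft : ∀ (h : H) (a : A), act h (e * a) = e * act h a := by
    intro h a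
    rw [hact.lpa2 h e a, sweedler_counit_left _ _ e hfe h]
    rfl
  -- h·(ae) = (h·a)e
  have hright : ∀ (h : H) (a : A), act h (a * e) = act h a * e := by
    intro h a
    rw [hact.lpa2 h a e, sweedler_counit_right _ _ e hfe h]
    rfl
  -- corner formula
  have hc : ∀ (h : H) (a : A), act h (e * a * e) = e * act h a * e := by
    intro h a
    rw [mul_assoc, hleft, hright, mul_assoc]
  -- (h·1)e = h·e  and  e(h·1) = h·e
  have hone_r : ∀ p : H, act p 1 * e = act p e := by
    intro p
    have := hact.lpa2 p 1 e
    rw [one_mul, sweedler_counit_right _ _ e hfe p] at this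
    exact (this.symm : _)
  have hone_l : ∀ p : H, e * act p 1 = act p e := by
    intro p
    have := hact.lpa2 p e 1
    rw [mul_one, sweedler_counit_left _ _ e hfe p] at this
    exact (this.symm : _)
  have hee : ∀ p : H, act p e * e = act p e := by
    intro p; rw [hcounit, smul_mul_assoc, he]
  have hee' : ∀ p : H, e * act p e = act p e := by
    intro p; rw [hcounit, mul_smul_comm, he]
  refine ⟨hleft, hright, ?_, ?_, ?_, ?_, ?_⟩
  · intro h a
    rw [hc h a]
    symm
    calc e * (e * act h a * e) * e
        = (e * e) * act h a * (e * e) := by rw [← mul_assoc, ← mul_assoc, mul_assoc _ e e]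
      _ = e * act h a * e := by rw [he]
  · intro a
    exact hact.lpa1 (e * a * e)
  · intro h a b
    exact hact.lpa2 h (e * a * e) (e * b * e)
  · intro h g a
    rw [hact.lpa3 h g (e * a * e)]
    refine LinearMap.congr_fun (sweedler_congr _ _ _ _ ?_) h
    intro p q
    have hG : (act.flip (e * a * e) ∘ₗ LinearMap.mulRight k g) q
        = e * act (q * g) (a * e) := by
      simp only [LinearMap.comp_apply, LinearMap.mulRight_apply, LinearMap.flip_apply]
      rw [mul_assoc, hleft]
    rw [hG]
    simp only [LinearMap.flip_apply]
    rw [← mul_assoc, ← mul_assoc, hone_r p, hee p]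
  · intro h g a
    rw [hact.lpa3' h g (e * a * e)]
    refine LinearMap.congr_fun (sweedler_congr _ _ _ _ ?_) h
    intro p q
    have hG : (act.flip (e * a * e) ∘ₗ LinearMap.mulRight k g) p
        = act (p * g) (e * a) * e := by
      simp only [LinearMap.comp_apply, LinearMap.mulRight_apply, LinearMap.flip_apply]
      rw [hright]
    rw [hG]
    simp only [LinearMap.flip_apply]
    rw [mul_assoc, mul_assoc, hone_l q, hee' q]
end
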